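/- For every natural number n ≥ 2 and permutations σ, τ of Fin n, the sum of squared rank differences ∑_{i ∈ Fin n} ((σ i : ℤ) − (τ i : ℤ))² equals its maximal value (n³ − n)/3 if and only if τ is the opposite of σ, i.e., τ(i) = n − 1 − σ(i) for all i. Equivalently, Spearman's coefficient ρ = 1 − 6·(∑_i d_i²)/(n³ − n) equals −1 exactly in the case of perfect opposition of the two rankings. -/

import Mathlib

open Finset Equiv


lemma sum_range_id' (n : ℕ) : 2 * ∑ i ∈ Finset.range n, (i:ℤ) = n * (n - 1) := by
  induction n with
  | zero => simp
  | succ m ih => rw [Finset.sum_range_succ]; push_cast at *; ring_nf at *; linarith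

lemma sum_range_sq' (n : ℕ) : 6 * ∑ i ∈ Finset.range n, (i:ℤ)^2 = n * (n - 1) * (2*n - 1) := by
  induction n with
  | zero => simp
  | succ m ih => rw [Finset.sum_range_succ]; push_cast at *; ring_nf at *; linarith

lemma perm_sum (n : ℕ) (σ : Equiv.Perm (Fin n)) (f : ℕ → ℤ) :
    ∑ i : Fin n, f (σ i) = ∑ i ∈ Finset.range n, f i := by
  rw [Equiv.sum_comp σ (fun i => f i), Fin.sum_univ_eq_sum_range]

lemma key (n : ℕ) (σ τ : Equiv.Perm (Fin n)) :
    3 * ((∑ i : Fin n, ((σ i : ℤ) - (τ i : ℤ)) ^ 2)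
        + ∑ i : Fin n, ((σ i : ℤ) + (τ i : ℤ) - ((n:ℤ) - 1)) ^ 2)
      = (n:ℤ)^3 - n := by
  have h1 := perm_sum n σ (fun i => (i:ℤ))
  have h2 := perm_sum n τ (fun i => (i:ℤ))
  have h3 := perm_sum n σ (fun i => (i:ℤ)^2)
  have h4 := perm_sum n τ (fun i => (i:ℤ)^2)
  have g1 := sum_range_id' n
  have g2 := sum_range_sq' n
  have expand : ∑ i : Fin n, (((σ i : ℤ) - (τ i : ℤ)) ^ 2 + ((σ i : ℤ) + (τ i : ℤ) - ((n:ℤ) - 1)) ^ 2)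
      = ∑ i : Fin n, (2*((σ i : ℤ))^2 + 2*((τ i : ℤ))^2 + ((n:ℤ)-1)^2
          - 2*((n:ℤ)-1)*(σ i : ℤ) - 2*((n:ℤ)-1)*(τ i : ℤ)) :=
    Finset.sum_congr rfl (by intros; ring)
  rw [← Finset.sum_add_distrib, expand]
  simp only [Finset.sum_sub_distrib, Finset.sum_add_distrib, ← Finset.mul_sum,
    Finset.sum_const, Finset.card_univ, Fintype.card_fin, nsmul_eq_mul]
  rw [h1, h2, h3, h4]
  linear_combination 2*g2 - 6*((n:ℤ)-1)*g1

/-- For `n ≥ 2` and permutations `σ, τ` of `Fin n`, the sum of squared rank differences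
equals its maximal value `(n³ − n)/3` if and only if `τ` is the opposite of `σ`, i.e.,
`τ i = n − 1 − σ i` for all `i`; equivalently, Spearman's coefficient
`ρ = 1 − 6·(∑ d_i²)/(n³ − n)` equals `−1` exactly in the case of perfect opposition. -/
theorem spearman_eq_neg_one_iff_opposite (n : ℕ) (hn : 2 ≤ n)
    (σ τ : Equiv.Perm (Fin n)) :
    ((∑ i : Fin n, ((σ i : ℤ) - (τ i : ℤ)) ^ 2) = ((n : ℤ) ^ 3 - n) / 3 ↔
      ∀ i : Fin n, τ i = Fin.rev (σ i)) ∧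
    (1 - 6 * (∑ i : Fin n, ((σ i : ℝ) - (τ i : ℝ)) ^ 2) / ((n : ℝ) ^ 3 - n) = -1 ↔
      ∀ i : Fin n, τ i = Fin.rev (σ i)) := by
  have hkey := key n σ τ
  set D := ∑ i : Fin n, ((σ i : ℤ) - (τ i : ℤ)) ^ 2 with hD
  set E := ∑ i : Fin n, ((σ i : ℤ) + (τ i : ℤ) - ((n:ℤ) - 1)) ^ 2 with hE
  have hEnn : 0 ≤ E := Finset.sum_nonneg fun i _ => sq_nonneg _
  have hopp : (∀ i : Fin n, τ i = Fin.rev (σ i)) ↔ E = 0 := by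
    rw [hE, Finset.sum_eq_zero_iff_of_nonneg fun i _ => sq_nonneg _]
    constructor
    · intro h i _
      have hv : (τ i).val = n - ((σ i).val + 1) := by rw [h i, Fin.val_rev]
      have hs := (σ i).isLt
      have : (σ i : ℤ) + (τ i : ℤ) - ((n:ℤ) - 1) = 0 := by omega
      rw [this]; ring
    · intro h i
      have := h i (Finset.mem_univ i)
      have h0 : (σ i : ℤ) + (τ i : ℤ) - ((n:ℤ) - 1) = 0 := by
        exact pow_eq_zero_iff (two_ne_zero) |>.mp this
      have hs := (σ i).isLt
      have ht := (τ i).isLt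
      apply Fin.ext
      rw [Fin.val_rev]
      omega
  have hcast : (∑ i : Fin n, ((σ i : ℝ) - (τ i : ℝ)) ^ 2) = (D : ℝ) := by
    rw [hD]; push_cast; rfl
  constructor
  · rw [hopp]
    set m := (n:ℤ)^3 - (n:ℤ) with hm
    omega
  · rw [hopp, hcast]
    have hn2 : (2:ℝ) ≤ n := by exact_mod_cast hn
    have hMpos : (0:ℝ) < (n:ℝ)^3 - n := by nlinarith [hn2, sq_nonneg ((n:ℝ) - 1), sq_nonneg ((n:ℝ))]
    have hM : ((n:ℝ)^3 - n) ≠ 0 := ne_of_gt hMpos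
    constructor
    · intro h
      have h6 : 6 * (D:ℝ) = 2 * ((n:ℝ)^3 - n) := by
        have h' : 6 * (D:ℝ) / ((n:ℝ)^3 - n) = 2 := by linarith
        rw [div_eq_iff hM] at h'; linarith
      have h3 : 3 * D = (n:ℤ)^3 - n := by
        have : (3:ℝ) * (D:ℤ) = ((n:ℤ)^3 - (n:ℤ) : ℤ) := by push_cast; linarith
        exact_mod_cast this
      linarith
    · intro hE0
      rw [hE0, add_zero] at hkey
      have h3 : (3:ℝ) * (D:ℝ) = (n:ℝ)^3 - n := by exact_mod_cast hkey
      rw [show 6 * (D:ℝ) = 2 * ((n:ℝ)^3 - n) by linarith, mul_div_assoc, div_self hM]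
      norm_num
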